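/- Let 𝓑 be the collection of all sets of the form [0,1] ∪ (x, x+2) for x ∈ ℝ. Then M_𝓑 satisfies a Tauberian condition with respect to 4/5, i.e., there exists a finite constant C such that |{x ∈ ℝ : M_𝓑 χ_E(x) > 4/5}| ≤ C|E| for all measurable sets E ⊆ ℝ, yet M_𝓑 is not bounded on L^p(ℝ) for any 1 < p < ∞ (for every 1 < p < ∞ and every constant K there exists f ∈ L^p(ℝ) with ‖M_𝓑 f‖_p > K‖f‖_p). -/

import Mathlib

open MeasureTheory Set Filter
open scoped ENNReal

/-- The geometric maximal operator associated to a collection `B` of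
subsets of `ℝ`. -/
noncomputable def MB (B : Set (Set ℝ)) (f : ℝ → ℝ≥0∞) (x : ℝ) : ℝ≥0∞ :=
  ⨆ (R ∈ B) (_ : x ∈ R), (∫⁻ y in R, f y) / volume R

/-- The basis of all sets of the form `[0,1] ∪ (x, x+2)`. -/
def B18 : Set (Set ℝ) := {T | ∃ x : ℝ, T = Set.Icc (0 : ℝ) 1 ∪ Set.Ioo x (x + 2)}

open Metric

/-!
Tauberian condition: a basis set `R = [0,1] ∪ (x, x+2)` has measure between `2` and `3`, so if
`χ_E` has average above `4/5` on `R`, then `|E ∩ R| > 8/5`, which forces `|E ∩ (x, x+2)| > 3/5`.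
Hence every point of `{M_𝓑 χ_E > 4/5}` outside `[0,1]` sees mass at least `3/5` of `E` within distance `2`,
and the set of such points has measure `≲ |E|` by Chebyshev, since `y ↦ |E ∩ B(y, 2)|` has
integral `4|E|`. Moreover `|E| > 8/5` as soon as the level set is nonempty, which absorbs `[0,1]`.

No `L^p` bound: every point lies in a basis set containing `[0,1]`, so `M_𝓑 χ_{[0,1]} ≥ 1/3`
everywhere and `M_𝓑 χ_{[0,1]} ∉ L^p(ℝ)`.
-/

lemma lintegral_eq_top_of_forall_le {α : Type*} [MeasurableSpace α] {μ : Measure α}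
    (hμ : μ univ = ∞) {c : ℝ≥0∞} (hc : c ≠ 0) {g : α → ℝ≥0∞} (h : ∀ x, c ≤ g x) :
    ∫⁻ x, g x ∂μ = ∞ :=
  top_le_iff.1 <| calc
    ∞ = c * μ univ := by rw [hμ, ENNReal.mul_top hc]
    _ = ∫⁻ _, c ∂μ := (lintegral_const c).symm
    _ ≤ ∫⁻ x, g x ∂μ := lintegral_mono h

section BallAverages

variable {E : Set ℝ}

lemma measurableSet_setOf_snd_mem_inter_ball (hE : MeasurableSet E) (r : ℝ) :
    MeasurableSet {q : ℝ × ℝ | q.2 ∈ E ∩ ball q.1 r} :=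
  (measurable_snd hE).inter (measurableSet_lt (measurable_snd.dist measurable_fst) measurable_const)

lemma measurable_volume_inter_ball (hE : MeasurableSet E) (r : ℝ) :
    Measurable fun y => volume (E ∩ ball y r) :=
  measurable_measure_prodMk_left (measurableSet_setOf_snd_mem_inter_ball hE r)

lemma lintegral_volume_inter_ball (hE : MeasurableSet E) (r : ℝ) :
    ∫⁻ y, volume (E ∩ ball y r) = ENNReal.ofReal (2 * r) * volume E := by
  have hs := measurableSet_setOf_snd_mem_inter_ball hE r
  have fiber : ∀ t, volume ((·, t) ⁻¹' {q : ℝ × ℝ | q.2 ∈ E ∩ ball q.1 r})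
      = E.indicator (fun _ => ENNReal.ofReal (2 * r)) t := by
    intro t
    by_cases ht : t ∈ E
    · have : (·, t) ⁻¹' {q : ℝ × ℝ | q.2 ∈ E ∩ ball q.1 r} = ball t r := by
        ext y; simp [ht, dist_comm]
      rw [this, Real.volume_ball, indicator_of_mem ht]
    · rw [indicator_of_notMem ht]
      simp [ht]
  calc ∫⁻ y, volume (E ∩ ball y r)
      = (volume.prod volume) {q : ℝ × ℝ | q.2 ∈ E ∩ ball q.1 r} := (Measure.prod_apply hs).symm
    _ = ∫⁻ t, E.indicator (fun _ => ENNReal.ofReal (2 * r)) t := by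
        rw [Measure.prod_apply_symm hs, lintegral_congr fiber]
    _ = ENNReal.ofReal (2 * r) * volume E := by
        rw [lintegral_indicator hE, setLIntegral_const, mul_comm]

lemma volume_setOf_le_volume_inter_ball_le (hE : MeasurableSet E) (r : ℝ) {ε : ℝ≥0∞}
    (hε : ε ≠ 0) (hε' : ε ≠ ∞) :
    volume {y | ε ≤ volume (E ∩ ball y r)} ≤ ENNReal.ofReal (2 * r) * volume E / ε := by
  rw [← lintegral_volume_inter_ball hE r]
  exact meas_ge_le_lintegral_div (measurable_volume_inter_ball hE r).aemeasurable hε hε'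

end BallAverages

section MaximalOperator

variable {B : Set (Set ℝ)} {f : ℝ → ℝ≥0∞} {R E : Set ℝ} {x : ℝ}

lemma setLIntegral_div_volume_le_MB (hR : R ∈ B) (hx : x ∈ R) :
    (∫⁻ y in R, f y) / volume R ≤ MB B f x :=
  le_iSup₂_of_le R hR (le_iSup_of_le hx le_rfl)

lemma exists_mem_lt_volume_inter_of_lt_MB_indicator (hE : MeasurableSet E) {c : ℝ≥0∞}
    (hc : c ≠ 0) (h : c < MB B (E.indicator 1) x) :
    ∃ R ∈ B, x ∈ R ∧ c * volume R < volume (E ∩ R) := by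
  simp only [MB, lt_iSup_iff] at h
  obtain ⟨R, hRB, hxR, hlt⟩ := h
  rw [lintegral_indicator_one hE, Measure.restrict_apply hE,
    ENNReal.lt_div_iff_mul_lt (Or.inr (ne_top_of_lt hlt)) (Or.inr hc)] at hlt
  exact ⟨R, hRB, hxR, hlt⟩

end MaximalOperator

section B18

lemma two_le_volume_Icc_union_Ioo (x : ℝ) : 2 ≤ volume (Icc (0 : ℝ) 1 ∪ Ioo x (x + 2)) :=
  calc (2 : ℝ≥0∞) = volume (Ioo x (x + 2)) := by simp
    _ ≤ _ := measure_mono subset_union_right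

lemma volume_Icc_union_Ioo_le_three (x : ℝ) : volume (Icc (0 : ℝ) 1 ∪ Ioo x (x + 2)) ≤ 3 :=
  calc volume (Icc (0 : ℝ) 1 ∪ Ioo x (x + 2))
      ≤ volume (Icc (0 : ℝ) 1) + volume (Ioo x (x + 2)) := measure_union_le _ _
    _ = 3 := by norm_num

lemma one_add_three_fifths_le : (1 : ℝ≥0∞) + 3 / 5 ≤ 4 / 5 * 2 := by
  rw [← ENNReal.toReal_le_toReal (by finiteness) (by finiteness),
    ENNReal.toReal_add (by finiteness) (by finiteness)]
  simp [ENNReal.toReal_div]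
  norm_num

variable {E : Set ℝ} {y : ℝ}

lemma exists_one_add_three_fifths_lt_volume_inter (hE : MeasurableSet E)
    (h : 4 / 5 < MB B18 (E.indicator 1) y) :
    ∃ x, y ∈ Icc (0 : ℝ) 1 ∪ Ioo x (x + 2) ∧
      1 + 3 / 5 < volume (E ∩ (Icc (0 : ℝ) 1 ∪ Ioo x (x + 2))) := by
  obtain ⟨R, ⟨x, rfl⟩, hyR, hlt⟩ :=
    exists_mem_lt_volume_inter_of_lt_MB_indicator hE (by norm_num) h
  refine ⟨x, hyR, lt_of_le_of_lt ?_ hlt⟩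
  exact one_add_three_fifths_le.trans (mul_le_mul_right (two_le_volume_Icc_union_Ioo x) _)

lemma one_le_volume_of_lt_MB_B18_indicator (hE : MeasurableSet E)
    (h : 4 / 5 < MB B18 (E.indicator 1) y) : 1 ≤ volume E := by
  obtain ⟨x, -, hlt⟩ := exists_one_add_three_fifths_lt_volume_inter hE h
  exact le_self_add.trans (hlt.le.trans (measure_mono inter_subset_left))

lemma setOf_lt_MB_B18_indicator_subset (hE : MeasurableSet E) :
    {y | 4 / 5 < MB B18 (E.indicator 1) y} ⊆
      Icc 0 1 ∪ {y | 3 / 5 ≤ volume (E ∩ ball y 2)} := by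
  intro y h
  obtain ⟨x, hy | hy, hlt⟩ := exists_one_add_three_fifths_lt_volume_inter hE h
  · exact Or.inl hy
  have hball : Ioo x (x + 2) ⊆ ball y 2 := by
    rw [Real.ball_eq_Ioo]
    exact Ioo_subset_Ioo (by linarith [hy.2]) (by linarith [hy.1])
  have hsplit : volume (E ∩ (Icc (0 : ℝ) 1 ∪ Ioo x (x + 2))) ≤ 1 + volume (E ∩ ball y 2) := by
    rw [inter_union_distrib_left]
    refine (measure_union_le _ _).trans (add_le_add ?_ (measure_mono (inter_subset_inter_right _ hball)))
    exact (measure_mono inter_subset_right).trans_eq (by simp)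
  exact Or.inr ((ENNReal.add_lt_add_iff_left ENNReal.one_ne_top).1 (hlt.trans_le hsplit)).le

lemma volume_setOf_lt_MB_B18_indicator_le (hE : MeasurableSet E) :
    volume {y | 4 / 5 < MB B18 (E.indicator 1) y} ≤ 8 * volume E := by
  rcases eq_empty_or_nonempty {y | 4 / 5 < MB B18 (E.indicator 1) y} with hempty | ⟨y, hy⟩
  · simp [hempty]
  have hE1 := one_le_volume_of_lt_MB_B18_indicator hE hy
  have hconst : (4 : ℝ≥0∞) / (3 / 5) ≤ 7 := by
    rw [ENNReal.div_le_iff (by simp) (by finiteness),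
      ← ENNReal.toReal_le_toReal (by finiteness) (by finiteness)]
    simp [ENNReal.toReal_div]
    norm_num
  calc volume {y | 4 / 5 < MB B18 (E.indicator 1) y}
      ≤ volume (Icc (0 : ℝ) 1) + volume {y | 3 / 5 ≤ volume (E ∩ ball y 2)} :=
        (measure_mono (setOf_lt_MB_B18_indicator_subset hE)).trans (measure_union_le _ _)
    _ ≤ volume E + ENNReal.ofReal (2 * 2) * volume E / (3 / 5) := by
        refine add_le_add (by simpa using hE1) ?_
        exact volume_setOf_le_volume_inter_ball_le hE 2 (by simp) (by finiteness)
    _ = volume E + 4 / (3 / 5) * volume E := by norm_num [ENNReal.mul_div_right_comm]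
    _ ≤ volume E + 7 * volume E := by gcongr
    _ = 8 * volume E := by ring

lemma inv_three_le_MB_B18_indicator_Icc (x : ℝ) :
    3⁻¹ ≤ MB B18 ((Icc (0 : ℝ) 1).indicator 1) x := by
  have hx : x ∈ Icc (0 : ℝ) 1 ∪ Ioo (x - 1) (x - 1 + 2) := Or.inr ⟨by linarith, by linarith⟩
  refine le_trans ?_ (setLIntegral_div_volume_le_MB ⟨x - 1, rfl⟩ hx)
  rw [lintegral_indicator_one measurableSet_Icc, Measure.restrict_apply measurableSet_Icc,
    inter_eq_left.2 subset_union_left, Real.volume_Icc, sub_zero, ENNReal.ofReal_one,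
    ← one_div]
  exact ENNReal.div_le_div_left (volume_Icc_union_Ioo_le_three _) 1

lemma lintegral_rpow_MB_B18_indicator_Icc_eq_top {p : ℝ} (hp : 0 < p) :
    ∫⁻ x, MB B18 ((Icc (0 : ℝ) 1).indicator 1) x ^ p = ∞ :=
  lintegral_eq_top_of_forall_le (by simp) (ENNReal.rpow_pos (by simp) (by simp)).ne'
    fun x => ENNReal.rpow_le_rpow (inv_three_le_MB_B18_indicator_Icc x) hp.le

end B18

theorem tauberian_without_Lp_bounds :
    (∃ C : ℝ, ∀ E : Set ℝ, MeasurableSet E →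
      volume {x : ℝ | MB B18 (E.indicator 1) x > (4 / 5 : ℝ≥0∞)}
        ≤ ENNReal.ofReal C * volume E) ∧
    (∀ p : ℝ, 1 < p → ∀ K : ℝ, ∃ f : ℝ → ℝ,
      MemLp f (ENNReal.ofReal p) volume ∧
      ENNReal.ofReal K * eLpNorm f (ENNReal.ofReal p) volume <
        (∫⁻ x : ℝ, (MB B18 (fun y => ENNReal.ofReal |f y|) x) ^ p) ^ (1 / p)) := by
  refine ⟨⟨8, fun E hE => ?_⟩, fun p hp K => ?_⟩
  · simpa using volume_setOf_lt_MB_B18_indicator_le hE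
  · have hp0 : 0 < p := one_pos.trans hp
    set f : ℝ → ℝ := (Icc (0 : ℝ) 1).indicator 1
    have hf : MemLp f (ENNReal.ofReal p) volume :=
      memLp_indicator_const _ measurableSet_Icc 1 (Or.inr (by simp))
    have hfabs : (fun y => ENNReal.ofReal |f y|) = (Icc (0 : ℝ) 1).indicator 1 := by
      ext y
      by_cases hy : y ∈ Icc (0 : ℝ) 1 <;> simp [f, hy]
    refine ⟨f, hf, ?_⟩
    rw [hfabs, lintegral_rpow_MB_B18_indicator_Icc_eq_top hp0,
      ENNReal.top_rpow_of_pos (by positivity)]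
    exact ENNReal.mul_lt_top ENNReal.ofReal_lt_top hf.eLpNorm_lt_top
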